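/- arXiv:0811.1228 — 4 statements merged into one kernel-verified Lean document; each statement's English description precedes it below -/
import Mathlib

section
/- Let n ≥ 1, let E = EuclideanSpace ℝ (Fin n), and equip E × E with the Euclidean product distance dist((a,b),(c,d)) = sqrt(dist(a,c)^2 + dist(b,d)^2). Let f : E → ℝ be three times continuously differentiable, and suppose there are constants M, N ≥ 0 with ‖iteratedFDeriv ℝ 2 f y‖ ≤ M and ‖iteratedFDeriv ℝ 3 f y‖ ≤ N for all y ∈ E. Let L = {(y, ∇f y) : y ∈ E}. Then there exists ρ > 0 such that for every point p ∈ L, the set {p' ∈ L : dist(p, p') < ρ}, with its subspace topology, is contractible. -/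
open Set
open scoped RealInnerProductSpace

private lemma aux_ineq {M N t c a1 r ip : ℝ} (hM0 : 0 ≤ M) (hN0 : 0 ≤ N)
    (ht0 : 0 ≤ t) (ht1 : t ≤ 1) (hc0 : 0 ≤ c) (ha10 : 0 ≤ a1) (hr0 : 0 ≤ r)
    (hv : M * N * c ≤ 1) (h1 : -ip ≤ a1 * r) (h2 : a1 ≤ M * c)
    (h3 : r ≤ N * (t * c) * (t * c)) :
    t * a1 ^ 2 + ip ≥ -(t * c ^ 2) := by
  have h4 : a1 * r ≤ (M * c) * (N * (t * c) * (t * c)) :=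
    mul_le_mul h2 h3 hr0 (mul_nonneg hM0 hc0)
  have htt : t * t ≤ t := by nlinarith
  have h5 : (M * c) * (N * (t * c) * (t * c)) ≤ t * c ^ 2 := by
    have he : (M * c) * (N * (t * c) * (t * c)) = (M * N * c) * ((t * t) * c ^ 2) := by ring
    rw [he]
    have h7 : (M * N * c) * ((t * t) * c ^ 2) ≤ 1 * ((t * t) * c ^ 2) := by
      apply mul_le_mul_of_nonneg_right hv
      positivity
    have h8 : (t * t) * c ^ 2 ≤ t * c ^ 2 := by nlinarith [sq_nonneg c]
    linarith
  nlinarith [mul_nonneg ht0 (sq_nonneg a1)]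

private lemma key_mono {n : ℕ} {g : EuclideanSpace ℝ (Fin n) → EuclideanSpace ℝ (Fin n)}
    (hgd : Differentiable ℝ g) {M N : ℝ} (hM0 : 0 ≤ M) (hN0 : 0 ≤ N)
    (hgM : ∀ x, ‖fderiv ℝ g x‖ ≤ M)
    (hgN : ∀ x y, ‖fderiv ℝ g x - fderiv ℝ g y‖ ≤ N * ‖x - y‖)
    (y₀ v : EuclideanSpace ℝ (Fin n)) (hv : M * N * ‖v‖ ≤ 1) :
    MonotoneOn (fun t : ℝ => t ^ 2 * ‖v‖ ^ 2 + ‖g (y₀ + t • v) - g y₀‖ ^ 2) (Icc 0 1) := by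
  set G : ℝ → EuclideanSpace ℝ (Fin n) := fun t => g (y₀ + t • v) - g y₀ with hGdef
  have hline : ∀ t : ℝ, HasDerivAt (fun t : ℝ => y₀ + t • v) v t := by
    intro t
    have := ((hasDerivAt_id t).smul_const v).const_add y₀
    simpa using this
  have hG : ∀ t : ℝ, HasDerivAt G (fderiv ℝ g (y₀ + t • v) v) t := by
    intro t
    have hd := (hgd (y₀ + t • v)).hasFDerivAt
    exact (hd.comp_hasDerivAt t (hline t)).sub_const (g y₀)
  have hφ : ∀ t : ℝ, HasDerivAt (fun t : ℝ => t ^ 2 * ‖v‖ ^ 2 + ‖G t‖ ^ 2)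
      (2 * t * ‖v‖ ^ 2 + 2 * ⟪fderiv ℝ g (y₀ + t • v) v, G t⟫) t := by
    intro t
    have h1 : HasDerivAt (fun t : ℝ => t ^ 2 * ‖v‖ ^ 2) (2 * t * ‖v‖ ^ 2) t := by
      have := (hasDerivAt_pow 2 t).mul_const (‖v‖ ^ 2)
      simpa [mul_comm] using this
    have h2 := (hG t).inner ℝ (hG t)
    have h2' : HasDerivAt (fun t => ‖G t‖ ^ 2) (2 * ⟪fderiv ℝ g (y₀ + t • v) v, G t⟫) t := by
      simp only [← real_inner_self_eq_norm_sq]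
      convert h2 using 1
      · rfl
      · rfl
      rw [real_inner_comm]
      ring
    exact h1.add h2'
  apply monotoneOn_of_deriv_nonneg (convex_Icc 0 1)
  · exact fun t _ => ((hφ t).continuousAt).continuousWithinAt
  · exact fun t _ => ((hφ t).differentiableAt).differentiableWithinAt
  · intro t ht
    rw [interior_Icc] at ht
    rw [(hφ t).deriv]
    set A := fderiv ℝ g (y₀ + t • v) with hA
    have ht0 : (0:ℝ) ≤ t := le_of_lt ht.1
    have ht1 : t ≤ 1 := le_of_lt ht.2
    -- Taylor-type remainder bound
    set R : EuclideanSpace ℝ (Fin n) := G t - t • (A v) with hR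
    have hRbound : ‖R‖ ≤ (N * (t * ‖v‖)) * (t * ‖v‖) := by
      have hseg : Convex ℝ (segment ℝ y₀ (y₀ + t • v)) := convex_segment _ _
      have hdiff : ∀ x ∈ segment ℝ y₀ (y₀ + t • v),
          DifferentiableAt ℝ (fun x => g x - A x) x :=
        fun x _ => (hgd x).sub (A.differentiable.differentiableAt)
      have hbd : ∀ x ∈ segment ℝ y₀ (y₀ + t • v),
          ‖fderiv ℝ (fun x => g x - A x) x‖ ≤ N * (t * ‖v‖) := by
        intro x hx
        have hfd : fderiv ℝ (fun x => g x - A x) x = fderiv ℝ g x - A := by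
          have := ((hgd x).hasFDerivAt.sub A.hasFDerivAt).fderiv
          exact this
        rw [hfd]
        have hxseg : ‖x - (y₀ + t • v)‖ ≤ t * ‖v‖ := by
          obtain ⟨a, b, ha, hb, hab, rfl⟩ := hx
          have ha1 : a ≤ 1 := by linarith
          have hb' : b = 1 - a := by linarith
          subst hb'
          have h5 : a • y₀ + (1 - a) • (y₀ + t • v) - (y₀ + t • v) = a • (y₀ - (y₀ + t • v)) := by
            module
          rw [h5, norm_smul]
          have h6 : ‖y₀ - (y₀ + t • v)‖ = t * ‖v‖ := by
            simp [norm_smul, abs_of_nonneg ht0]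
          rw [h6, Real.norm_of_nonneg ha]
          nlinarith [norm_nonneg v, mul_nonneg ht0 (norm_nonneg v)]
        calc ‖fderiv ℝ g x - A‖ ≤ N * ‖x - (y₀ + t • v)‖ := hgN _ _
          _ ≤ N * (t * ‖v‖) := by nlinarith
      have := Convex.norm_image_sub_le_of_norm_fderiv_le hdiff hbd hseg
        (left_mem_segment ℝ y₀ (y₀ + t • v)) (right_mem_segment ℝ y₀ (y₀ + t • v))
      have hsimp : (fun x => g x - A x) (y₀ + t • v) - (fun x => g x - A x) y₀ = R := by
        simp only [hR, hGdef]
        rw [map_add, A.map_smul]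
        abel
      rw [hsimp] at this
      have : ‖R‖ ≤ N * (t * ‖v‖) * ‖y₀ + t • v - y₀‖ := this
      have hnv : ‖y₀ + t • v - y₀‖ = t * ‖v‖ := by
        simp [norm_smul, abs_of_nonneg ht0]
      rw [hnv] at this
      linarith
    have hAv : ‖A v‖ ≤ M * ‖v‖ := le_trans (A.le_opNorm v) (by
      have := hgM (y₀ + t • v); nlinarith [norm_nonneg v])
    have hinner : ⟪A v, G t⟫ ≥ -(t * ‖v‖ ^ 2) := by
      have hGt : G t = t • (A v) + R := by rw [hR]; abel
      rw [hGt, inner_add_right, real_inner_smul_right, real_inner_self_eq_norm_sq]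
      have hCS : -⟪A v, R⟫ ≤ ‖A v‖ * ‖R‖ := by
        have := abs_real_inner_le_norm (A v) R
        have h0 := neg_abs_le (⟪A v, R⟫)
        linarith
      have hRb' : ‖R‖ ≤ N * (t * ‖v‖) * (t * ‖v‖) := by
        have := hRbound; linarith [hRbound]
      exact aux_ineq hM0 hN0 ht0 ht1 (norm_nonneg v) (norm_nonneg (A v)) (norm_nonneg R)
        hv hCS hAv hRb'
    have final : 0 ≤ 2 * t * ‖v‖ ^ 2 + 2 * ⟪A v, G t⟫ := by linarith
    exact final

private lemma norm_fderiv_eq_one {E F : Type*} [NormedAddCommGroup E] [NormedSpace ℝ E]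
    [NormedAddCommGroup F] [NormedSpace ℝ F] (h : E → F)
    (x : E) : ‖fderiv ℝ h x‖ = ‖iteratedFDeriv ℝ 1 h x‖ := by
  rw [← norm_iteratedFDeriv_fderiv, norm_iteratedFDeriv_zero]

/-- Part (1) of the tameness proposition: ... -/
theorem stmt_1 (n : ℕ) (hn : 1 ≤ n)
    (f : EuclideanSpace ℝ (Fin n) → ℝ) (hf : ContDiff ℝ 3 f)
    (M N : ℝ) (hM : 0 ≤ M) (hN : 0 ≤ N)
    (hM2 : ∀ y, ‖iteratedFDeriv ℝ 2 f y‖ ≤ M)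
    (hN3 : ∀ y, ‖iteratedFDeriv ℝ 3 f y‖ ≤ N)
    (L : Set (WithLp 2 (EuclideanSpace ℝ (Fin n) × EuclideanSpace ℝ (Fin n))))
    (hL : L = {q | ∃ y, q =
      (WithLp.equiv 2 (EuclideanSpace ℝ (Fin n) × EuclideanSpace ℝ (Fin n))).symm
        (y, gradient f y)}) :
    ∃ ρ : ℝ, 0 < ρ ∧ ∀ p ∈ L,
      ContractibleSpace {p' : WithLp 2 (EuclideanSpace ℝ (Fin n) × EuclideanSpace ℝ (Fin n)) //
        p' ∈ L ∧ dist p p' < ρ} := by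
  subst hL
  set g : EuclideanSpace ℝ (Fin n) → EuclideanSpace ℝ (Fin n) := gradient f with hgdef
  have hgcomp : g = (InnerProductSpace.toDual ℝ (EuclideanSpace ℝ (Fin n))).symm ∘
      (fderiv ℝ f) := rfl
  have h1 : ContDiff ℝ 2 (fderiv ℝ f) := hf.fderiv_right (by norm_num)
  have hgC : ContDiff ℝ 2 g := by
    rw [hgcomp]
    exact ((InnerProductSpace.toDual ℝ (EuclideanSpace ℝ (Fin n))).symm.contDiff).comp h1
  have hgd : Differentiable ℝ g := hgC.differentiable (by norm_num)
  -- second derivative bound for g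
  have hgM : ∀ x, ‖fderiv ℝ g x‖ ≤ M := by
    intro x
    rw [norm_fderiv_eq_one, hgcomp,
      LinearIsometryEquiv.norm_iteratedFDeriv_comp_left _ (fderiv ℝ f) x 1,
      norm_iteratedFDeriv_fderiv]
    exact hM2 x
  -- third derivative bound gives Lipschitz bound for the Hessian of f, i.e. fderiv g
  have hgN' : ∀ x, ‖fderiv ℝ (fderiv ℝ g) x‖ ≤ N := by
    intro x
    rw [norm_fderiv_eq_one, norm_iteratedFDeriv_fderiv, hgcomp,
      LinearIsometryEquiv.norm_iteratedFDeriv_comp_left _ (fderiv ℝ f) x 2,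
      norm_iteratedFDeriv_fderiv]
    exact hN3 x
  have hgC1 : ContDiff ℝ 1 (fderiv ℝ g) := hgC.fderiv_right (by norm_num)
  have hgN : ∀ x y, ‖fderiv ℝ g x - fderiv ℝ g y‖ ≤ N * ‖x - y‖ := by
    intro x y
    exact Convex.norm_image_sub_le_of_norm_fderiv_le
      (fun z _ => hgC1.differentiable one_ne_zero z)
      (fun z _ => hgN' z) convex_univ (mem_univ y) (mem_univ x)
  -- the uniform radius
  set ρ : ℝ := (M * N + 1)⁻¹ with hρdef
  have hMN : 0 < M * N + 1 := by nlinarith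
  have hρ : 0 < ρ := inv_pos.mpr hMN
  refine ⟨ρ, hρ, ?_⟩
  rintro p ⟨y₀, rfl⟩
  -- the distance formula
  have hdist : ∀ y : EuclideanSpace ℝ (Fin n),
      dist ((WithLp.equiv 2 (EuclideanSpace ℝ (Fin n) × EuclideanSpace ℝ (Fin n))).symm
          (y₀, g y₀))
        ((WithLp.equiv 2 (EuclideanSpace ℝ (Fin n) × EuclideanSpace ℝ (Fin n))).symm (y, g y)) =
      Real.sqrt (‖y - y₀‖ ^ 2 + ‖g y - g y₀‖ ^ 2) := by
    intro y
    rw [WithLp.prod_dist_eq_add (by norm_num : 0 < (2 : ENNReal).toReal)]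
    have h2 : ((2 : ENNReal)).toReal = (2 : ℝ) := by norm_num
    rw [h2]
    simp only [WithLp.equiv_symm_apply, WithLp.toLp_fst, WithLp.toLp_snd]
    rw [Real.sqrt_eq_rpow]
    congr 1
    · rw [dist_eq_norm', dist_eq_norm']
      rw [← Real.rpow_natCast ‖y - y₀‖ 2, ← Real.rpow_natCast ‖g y - g y₀‖ 2]
      norm_num
  -- membership criterion
  have hmem : ∀ y : EuclideanSpace ℝ (Fin n),
      dist ((WithLp.equiv 2 (EuclideanSpace ℝ (Fin n) × EuclideanSpace ℝ (Fin n))).symm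
          (y₀, g y₀))
        ((WithLp.equiv 2 (EuclideanSpace ℝ (Fin n) × EuclideanSpace ℝ (Fin n))).symm (y, g y))
        < ρ ↔ ‖y - y₀‖ ^ 2 + ‖g y - g y₀‖ ^ 2 < ρ ^ 2 := by
    intro y
    rw [hdist y, Real.sqrt_lt' hρ]
  -- the parameter set
  set U : Set (EuclideanSpace ℝ (Fin n)) :=
    {y | ‖y - y₀‖ ^ 2 + ‖g y - g y₀‖ ^ 2 < ρ ^ 2} with hUdef
  -- U is star-shaped around y₀
  have hstar : StarConvex ℝ y₀ U := by
    intro y hy a b ha hb hab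
    have hy' : ‖y - y₀‖ ^ 2 + ‖g y - g y₀‖ ^ 2 < ρ ^ 2 := hy
    set v : EuclideanSpace ℝ (Fin n) := y - y₀ with hvdef
    have hvρ : ‖v‖ < ρ := by
      nlinarith [norm_nonneg v, sq_nonneg ‖g y - g y₀‖, hρ]
    have hv1 : M * N * ‖v‖ ≤ 1 := by
      have h3 : M * N * ‖v‖ ≤ M * N * ρ := by nlinarith [mul_nonneg hM hN]
      have h4 : M * N * ρ ≤ 1 := by
        rw [hρdef]
        rw [← div_eq_mul_inv, div_le_one hMN]
        linarith
      linarith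
    have hmono := key_mono hgd hM hN hgM hgN y₀ v hv1
    have hb1 : b ≤ 1 := by linarith
    have hkey : b ^ 2 * ‖v‖ ^ 2 + ‖g (y₀ + b • v) - g y₀‖ ^ 2 ≤
        1 ^ 2 * ‖v‖ ^ 2 + ‖g (y₀ + (1:ℝ) • v) - g y₀‖ ^ 2 :=
      hmono ⟨hb, hb1⟩ ⟨zero_le_one, le_refl 1⟩ hb1
    have hy1 : y₀ + (1:ℝ) • v = y := by rw [one_smul, hvdef]; abel
    have hab' : a • y₀ + b • y = y₀ + b • v := by
      have ha' : a = 1 - b := by linarith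
      subst ha'
      rw [hvdef]
      module
    rw [hab']
    show ‖(y₀ + b • v) - y₀‖ ^ 2 + ‖g (y₀ + b • v) - g y₀‖ ^ 2 < ρ ^ 2
    have hnb : ‖(y₀ + b • v) - y₀‖ ^ 2 = b ^ 2 * ‖v‖ ^ 2 := by
      have : (y₀ + b • v) - y₀ = b • v := by abel
      rw [this, norm_smul, mul_pow, Real.norm_of_nonneg hb]
    rw [hnb]
    rw [hy1] at hkey
    calc b ^ 2 * ‖v‖ ^ 2 + ‖g (y₀ + b • v) - g y₀‖ ^ 2
        ≤ 1 ^ 2 * ‖v‖ ^ 2 + ‖g y - g y₀‖ ^ 2 := hkey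
      _ = ‖y - y₀‖ ^ 2 + ‖g y - g y₀‖ ^ 2 := by rw [one_pow, one_mul]
      _ < ρ ^ 2 := hy'
  have hU0 : y₀ ∈ U := by
    show ‖y₀ - y₀‖ ^ 2 + ‖g y₀ - g y₀‖ ^ 2 < ρ ^ 2
    simp [pow_pos hρ]
  have hUcontr : ContractibleSpace ↑U := hstar.contractibleSpace ⟨y₀, hU0⟩
  -- transfer contractibility through the graph homeomorphism
  set p₀ := (WithLp.equiv 2 (EuclideanSpace ℝ (Fin n) × EuclideanSpace ℝ (Fin n))).symm
    (y₀, g y₀) with hp₀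
  let B := {p' : WithLp 2 (EuclideanSpace ℝ (Fin n) × EuclideanSpace ℝ (Fin n)) //
    p' ∈ {q | ∃ y, q = (WithLp.equiv 2
      (EuclideanSpace ℝ (Fin n) × EuclideanSpace ℝ (Fin n))).symm (y, g y)} ∧ dist p₀ p' < ρ}
  have hc1 : Continuous (WithLp.equiv 2
      (EuclideanSpace ℝ (Fin n) × EuclideanSpace ℝ (Fin n))) :=
    WithLp.prod_continuous_ofLp _ _ _
  have hc2 : Continuous (WithLp.equiv 2
      (EuclideanSpace ℝ (Fin n) × EuclideanSpace ℝ (Fin n))).symm :=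
    WithLp.prod_continuous_toLp _ _ _
  have hhomeo : Nonempty (B ≃ₜ ↑U) := by
    refine ⟨{
      toFun := fun q => ⟨(WithLp.equiv 2 _ q.val).1, ?_⟩
      invFun := fun u => ⟨(WithLp.equiv 2 _).symm (u.val, g u.val),
        ⟨⟨u.val, rfl⟩, (hmem u.val).mpr u.prop⟩⟩
      left_inv := ?_
      right_inv := ?_
      continuous_toFun := ?_
      continuous_invFun := ?_ }⟩
    · obtain ⟨⟨y, hy⟩, hdlt⟩ := q.prop
      rw [hy] at hdlt ⊢
      rw [Equiv.apply_symm_apply]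
      exact (hmem y).mp hdlt
    · rintro ⟨q, ⟨y, rfl⟩, hdlt⟩
      simp only [Subtype.mk.injEq, Equiv.apply_symm_apply]
    · rintro ⟨u, hu⟩
      simp only [Subtype.mk.injEq, Equiv.apply_symm_apply]
    · exact (continuous_fst.comp (hc1.comp continuous_subtype_val)).subtype_mk _
    · exact (hc2.comp
        ((continuous_subtype_val).prodMk (hgC.continuous.comp continuous_subtype_val))).subtype_mk _
  exact hhomeo.elim fun e => e.contractibleSpace
end

section
/- Let n ≥ 1, let E = EuclideanSpace ℝ (Fin n), and equip E × E with the Euclidean product distance dist((a,b),(c,d)) = sqrt(dist(a,c)^2 + dist(b,d)^2). Let f : E → ℝ be three times continuously differentiable, and suppose there are constants M, N ≥ 0 with ‖iteratedFDeriv ℝ 2 f y‖ ≤ M and ‖iteratedFDeriv ℝ 3 f y‖ ≤ N for all y ∈ E. Then there exists ρ > 0 such that for every y₀ ∈ E and every ξ ∈ E with ‖ξ‖ = 1, the function t ↦ dist((y₀ + t•ξ, ∇f(y₀ + t•ξ)), (y₀, ∇f y₀)) is strictly monotone increasing on the interval [0, ρ]. -/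
open Set InnerProductSpace
open scoped RealInnerProductSpace


variable {E : Type*} [NormedAddCommGroup E] [InnerProductSpace ℝ E] [CompleteSpace E]

set_option maxHeartbeats 4000000 in
theorem aux_strictmono (f : E → ℝ) (hf : ContDiff ℝ 3 f)
    (M N : ℝ) (hM : 0 ≤ M) (hN : 0 ≤ N)
    (hM2 : ∀ y, ‖iteratedFDeriv ℝ 2 f y‖ ≤ M)
    (hN3 : ∀ y, ‖iteratedFDeriv ℝ 3 f y‖ ≤ N) :
    ∃ ρ : ℝ, 0 < ρ ∧ ∀ (y₀ ξ : E), ‖ξ‖ = 1 →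
      StrictMonoOn (fun t : ℝ => t ^ 2 + ‖gradient f (y₀ + t • ξ) - gradient f y₀‖ ^ 2)
        (Icc 0 ρ) := by
  set φ := fderiv ℝ f with hφdef
  have hφ : ContDiff ℝ 2 φ := hf.fderiv_right (by norm_num)
  set G := fderiv ℝ φ with hGdef
  have hφdiff : Differentiable ℝ φ := hφ.differentiable (by norm_num)
  have hG1 : ContDiff ℝ 1 G := hφ.fderiv_right (by norm_num)
  have hGdiff : Differentiable ℝ G := hG1.differentiable (by norm_num)
  have hGM : ∀ y, ‖G y‖ ≤ M := by
    intro y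
    have h1 : ‖G y‖ = ‖iteratedFDeriv ℝ 2 f y‖ := by
      calc ‖G y‖ = ‖iteratedFDeriv ℝ 0 G y‖ := (norm_iteratedFDeriv_zero (f := G) (x := y)).symm
        _ = ‖iteratedFDeriv ℝ 1 φ y‖ := norm_iteratedFDeriv_fderiv
        _ = ‖iteratedFDeriv ℝ 2 f y‖ := norm_iteratedFDeriv_fderiv
    rw [h1]; exact hM2 y
  letI inst3 : NormedAddCommGroup (E →L[ℝ] E →L[ℝ] E →L[ℝ] ℝ) :=
    @ContinuousLinearMap.toNormedAddCommGroup ℝ ℝ E (E →L[ℝ] E →L[ℝ] ℝ) _ _ _ _ _ _ _ _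
  have hGN : ∀ y, ‖fderiv ℝ G y‖ ≤ N := by
    intro y
    have h1 : ‖fderiv ℝ G y‖ = ‖iteratedFDeriv ℝ 3 f y‖ := by
      calc ‖fderiv ℝ G y‖ = ‖iteratedFDeriv ℝ 1 G y‖ :=
            (norm_iteratedFDeriv_one (𝕜 := ℝ) (x := y) G).symm
        _ = ‖iteratedFDeriv ℝ 2 φ y‖ := norm_iteratedFDeriv_fderiv
        _ = ‖iteratedFDeriv ℝ 3 f y‖ := norm_iteratedFDeriv_fderiv
    rw [h1]; exact hN3 y
  have hGlip : ∀ y z : E, ‖G y - G z‖ ≤ N * ‖y - z‖ := fun y z =>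
    convex_univ.norm_image_sub_le_of_norm_fderiv_le (𝕜 := ℝ) (G := E →L[ℝ] E →L[ℝ] ℝ) (f := G) (fun x _ => hGdiff x)
      (fun x _ => hGN x) trivial trivial
  set L : (StrongDual ℝ E) →L[ℝ] E :=
    ((toDual ℝ E).symm.toContinuousLinearEquiv : StrongDual ℝ E ≃L[ℝ] E).toContinuousLinearMap
    with hLdef
  have hLnorm : ∀ x, ‖L x‖ = ‖x‖ := fun x => (toDual ℝ E).symm.norm_map x
  have hgradL : ∀ y, gradient f y = L (φ y) := fun y => rfl
  -- choose ρ
  refine ⟨1 / (2 * M * N + 1), by positivity, ?_⟩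
  intro y₀ ξ hξ
  set ρ := 1 / (2 * M * N + 1) with hρdef
  have hρpos : 0 < ρ := by positivity
  set c : ℝ → E := fun t => y₀ + t • ξ with hcdef
  set a : ℝ → E := fun t => gradient f (y₀ + t • ξ) - gradient f y₀ with hadef
  set v : ℝ → E := fun t => L (G (c t) ξ) with hvdef
  have hc : ∀ t : ℝ, HasDerivAt c ξ t := by
    intro t
    have h1 : HasDerivAt (fun s : ℝ => s • ξ) ((1 : ℝ) • ξ) t := (hasDerivAt_id t).smul_const ξ
    simpa [hcdef, one_smul] using h1.const_add y₀
  have ha : ∀ t : ℝ, HasDerivAt a (v t) t := by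
    intro t
    have h1 : HasFDerivAt (fun y => gradient f y) (L.comp (G (c t))) (c t) := by
      have := L.hasFDerivAt.comp (c t) (hφdiff (c t)).hasFDerivAt
      exact this
    have h2 : HasDerivAt (fun t => gradient f (c t)) (L.comp (G (c t)) ξ) t :=
      h1.comp_hasDerivAt t (hc t)
    simpa [hadef, hcdef, hvdef] using h2.sub_const (gradient f y₀)
  have hvM : ∀ t, ‖v t‖ ≤ M := by
    intro t
    rw [hvdef]
    simp only
    rw [hLnorm]
    calc ‖G (c t) ξ‖ ≤ ‖G (c t)‖ * ‖ξ‖ := (G (c t)).le_opNorm ξ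
      _ ≤ M := by rw [hξ, mul_one]; exact hGM _
  have hvlip : ∀ s t : ℝ, ‖v t - v s‖ ≤ N * |t - s| := by
    intro s t
    rw [hvdef]
    simp only
    rw [← map_sub, hLnorm]
    have h1 : G (c t) ξ - G (c s) ξ = (G (c t) - G (c s)) ξ := by simp
    rw [h1]
    calc ‖(G (c t) - G (c s)) ξ‖ ≤ ‖G (c t) - G (c s)‖ * ‖ξ‖ := (G (c t) - G (c s)).le_opNorm ξ
      _ ≤ (N * ‖c t - c s‖) * 1 := by rw [hξ]; exact mul_le_mul_of_nonneg_right (hGlip _ _) zero_le_one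
      _ = N * |t - s| := by
          rw [mul_one]
          have hcc : c t - c s = (t - s) • ξ := by
            simp [hcdef, sub_smul]
          rw [hcc, norm_smul, hξ, mul_one, Real.norm_eq_abs]
  have ha0 : a 0 = 0 := by simp [hadef]
  -- Taylor-type bound : ‖a t - t • v 0‖ ≤ N * t * t for t ≥ 0
  have htaylor : ∀ t : ℝ, 0 ≤ t → ‖a t - t • v 0‖ ≤ N * t * t := by
    intro t ht
    have key := Convex.norm_image_sub_le_of_norm_hasDerivWithin_le
      (f := fun s : ℝ => a s - s • v 0) (f' := fun s => v s - v 0) (C := N * t)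
      (s := Icc (0:ℝ) t)
      (fun s hs => by
        have h1 : HasDerivAt (fun s : ℝ => a s - s • v 0) (v s - (1:ℝ) • v 0) s :=
          (ha s).sub ((hasDerivAt_id s).smul_const (v 0))
        simpa [one_smul] using h1.hasDerivWithinAt)
      (fun s hs => by
        have := hvlip 0 s
        have hb : ‖v s - v 0‖ ≤ N * s := by simpa [abs_of_nonneg hs.1] using this
        exact hb.trans (mul_le_mul_of_nonneg_left hs.2 hN))
      (convex_Icc 0 t) ⟨le_rfl, ht⟩ ⟨ht, le_rfl⟩
    simpa [ha0, abs_of_nonneg ht] using key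
  -- derivative of h
  set D : ℝ → ℝ := fun t => 2 * t + (⟪a t, v t⟫ + ⟪v t, a t⟫) with hDdef
  have hh : ∀ t : ℝ, HasDerivAt
      (fun t : ℝ => t ^ 2 + ‖gradient f (y₀ + t • ξ) - gradient f y₀‖ ^ 2) (D t) t := by
    intro t
    have h1 : HasDerivAt (fun t : ℝ => t ^ 2) (2 * t) t := by
      simpa using hasDerivAt_pow 2 t
    have h2 : HasDerivAt (fun t => ⟪a t, a t⟫) (⟪a t, v t⟫ + ⟪v t, a t⟫) t :=
      (ha t).inner ℝ (ha t)
    have h3 : (fun t : ℝ => t ^ 2 + ‖gradient f (y₀ + t • ξ) - gradient f y₀‖ ^ 2)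
        = fun t => t ^ 2 + ⟪a t, a t⟫ := by
      funext s
      rw [real_inner_self_eq_norm_sq]
    rw [h3, hDdef]
    exact h1.add h2
  -- lower bound for D on (0, ρ)
  have hDpos : ∀ t ∈ Ioo (0:ℝ) ρ, 0 < D t := by
    intro t ht
    obtain ⟨ht0, htρ⟩ := ht
    have hinner : -(2 * M * N * t ^ 2) ≤ ⟪v t, a t⟫ := by
      have e1 : ⟪v t, a t⟫ = ⟪v t, a t - t • v 0⟫ + t * ⟪v t - v 0, v 0⟫ + t * ⟪v 0, v 0⟫ := by
        simp only [inner_sub_right, inner_sub_left, real_inner_smul_right]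
        ring
      have b1 : |⟪v t, a t - t • v 0⟫| ≤ M * (N * t * t) := by
        calc |⟪v t, a t - t • v 0⟫| ≤ ‖v t‖ * ‖a t - t • v 0‖ := abs_real_inner_le_norm _ _
          _ ≤ M * (N * t * t) := mul_le_mul (hvM t) (htaylor t ht0.le)
              (norm_nonneg _) hM
      have b2 : |⟪v t - v 0, v 0⟫| ≤ (N * t) * M := by
        calc |⟪v t - v 0, v 0⟫| ≤ ‖v t - v 0‖ * ‖v 0‖ := abs_real_inner_le_norm _ _
          _ ≤ (N * t) * M := by
              apply mul_le_mul _ (hvM 0) (norm_nonneg _) (by positivity)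
              simpa [abs_of_nonneg ht0.le] using hvlip 0 t
      have b3 : (0:ℝ) ≤ ⟪v 0, v 0⟫ := real_inner_self_nonneg
      nlinarith [neg_abs_le ⟪v t, a t - t • v 0⟫_ℝ, neg_abs_le ⟪v t - v 0, v 0⟫_ℝ,
        mul_le_mul_of_nonneg_left b2 ht0.le, b3, mul_nonneg ht0.le b3]
    have hinner' : -(2 * M * N * t ^ 2) ≤ ⟪a t, v t⟫ := by
      rwa [real_inner_comm]
    have hρ1 : ρ * (2 * M * N + 1) = 1 := by
      rw [hρdef]; field_simp
    have hsmall : 2 * M * N * t < 1 := by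
      have h1 : 2 * M * N * t ≤ 2 * M * N * ρ := by
        apply mul_le_mul_of_nonneg_left htρ.le (by positivity)
      nlinarith
    have h5 : t * (2 * M * N * t) < t * 1 := mul_lt_mul_of_pos_left hsmall ht0
    have h4 : 4 * M * N * t ^ 2 < 2 * t := by nlinarith [h5]
    have goal : 0 < 2 * t + (⟪a t, v t⟫ + ⟪v t, a t⟫) := by linarith
    simpa [hDdef] using goal
  -- conclude strict monotonicity
  have hcont : ContinuousOn
      (fun t : ℝ => t ^ 2 + ‖gradient f (y₀ + t • ξ) - gradient f y₀‖ ^ 2) (Icc 0 ρ) :=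
    fun t _ => ((hh t).continuousAt).continuousWithinAt
  apply strictMonoOn_of_deriv_pos (convex_Icc 0 ρ) hcont
  intro t ht
  rw [interior_Icc] at ht
  rw [(hh t).deriv]
  exact hDpos t ht



/-- The key intermediate claim of the tameness proposition: for a `C³` function with
uniformly bounded second and third derivatives, there is a uniform `ρ > 0` such that
along every unit-speed ray in the base, the Euclidean product distance (modeled by
`WithLp 2 (E × E)`) from the moving point of the gradient graph to the initial point is
strictly increasing on `[0, ρ]`. -/
theorem stmt_2 (n : ℕ) (hn : 1 ≤ n)
    (f : EuclideanSpace ℝ (Fin n) → ℝ) (hf : ContDiff ℝ 3 f)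
    (M N : ℝ) (hM : 0 ≤ M) (hN : 0 ≤ N)
    (hM2 : ∀ y, ‖iteratedFDeriv ℝ 2 f y‖ ≤ M)
    (hN3 : ∀ y, ‖iteratedFDeriv ℝ 3 f y‖ ≤ N) :
    ∃ ρ : ℝ, 0 < ρ ∧
      ∀ (y₀ ξ : EuclideanSpace ℝ (Fin n)), ‖ξ‖ = 1 →
        StrictMonoOn
          (fun t : ℝ => dist
            ((WithLp.equiv 2 (EuclideanSpace ℝ (Fin n) × EuclideanSpace ℝ (Fin n))).symm
              (y₀ + t • ξ, gradient f (y₀ + t • ξ)))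
            ((WithLp.equiv 2 (EuclideanSpace ℝ (Fin n) × EuclideanSpace ℝ (Fin n))).symm
              (y₀, gradient f y₀)))
          (Icc 0 ρ) := by
  obtain ⟨ρ, hρpos, hmono⟩ := aux_strictmono f hf M N hM hN hM2 hN3
  refine ⟨ρ, hρpos, ?_⟩
  intro y₀ ξ hξ
  have hdist : ∀ t : ℝ, t ∈ Icc (0:ℝ) ρ →
      dist ((WithLp.equiv 2 (EuclideanSpace ℝ (Fin n) × EuclideanSpace ℝ (Fin n))).symm
              (y₀ + t • ξ, gradient f (y₀ + t • ξ)))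
           ((WithLp.equiv 2 (EuclideanSpace ℝ (Fin n) × EuclideanSpace ℝ (Fin n))).symm
              (y₀, gradient f y₀))
        = Real.sqrt (t ^ 2 + ‖gradient f (y₀ + t • ξ) - gradient f y₀‖ ^ 2) := by
    intro t ht
    rw [WithLp.prod_dist_eq_of_L2]
    simp only [WithLp.equiv_symm_apply, WithLp.toLp_fst, WithLp.toLp_snd]
    congr 1
    · have h1 : dist (y₀ + t • ξ) y₀ = t := by
        rw [dist_eq_norm, add_sub_cancel_left, norm_smul, hξ, mul_one,
          Real.norm_eq_abs, abs_of_nonneg ht.1]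
      have h2 : dist (gradient f (y₀ + t • ξ)) (gradient f y₀)
          = ‖gradient f (y₀ + t • ξ) - gradient f y₀‖ := dist_eq_norm _ _
      rw [h1, h2]
  intro s hs t ht hst
  simp only [hdist s hs, hdist t ht]
  apply Real.sqrt_lt_sqrt (by positivity)
  exact hmono y₀ ξ hξ hs ht hst
end

section
/- Let n ≥ 1 and let g be a symmetric positive definite n × n real matrix; define the quadratic form Q : (Fin n → ℝ) → ℝ by Q(y) = Σ_{j,k} g j k * y j * y k. Define L = {(x, y) ∈ (Fin n → ℝ) × (Fin n → ℝ) : Q(y) < 1 and for every i, x i = Real.exp (y i / Real.sqrt (1 − Q(y)))}. Then the intersection of the closure of L (in the product topology) with the set {(x, y) : Q(y) = 1} equals {(x, y) : Q(y) = 1 and for every j, 0 ≤ x j, y j ≤ 0, and x j * y j = 0}. -/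
open Set Filter Topology

private lemma qf_nonneg {n : ℕ} {g : Matrix (Fin n) (Fin n) ℝ} (hpos : g.PosDef)
    (w : Fin n → ℝ) : 0 ≤ ∑ j, ∑ k, g j k * w j * w k := by
  have h := hpos.posSemidef.dotProduct_mulVec_nonneg w
  simp [dotProduct, Matrix.mulVec, Finset.mul_sum] at h
  convert h using 2 with j
  · exact rfl
  exact Finset.sum_congr rfl fun k _ => by ring

private lemma qf_expand {n : ℕ} {g : Matrix (Fin n) (Fin n) ℝ} (hsymm : g.IsSymm)
    (y w : Fin n → ℝ) (t r : ℝ) :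
    ∑ j, ∑ k, g j k * (t * y j + r * w j) * (t * y k + r * w k)
      = t^2 * (∑ j, ∑ k, g j k * y j * y k)
        + 2*t*r*(∑ k, w k * ∑ l, g k l * y l)
        + r^2 * (∑ j, ∑ k, g j k * w j * w k) := by
  have swap : ∑ j, ∑ k, g j k * y j * w k = ∑ k, w k * ∑ l, g k l * y l := by
    rw [Finset.sum_comm]
    refine Finset.sum_congr rfl fun k _ => ?_
    rw [Finset.mul_sum]
    refine Finset.sum_congr rfl fun j _ => ?_
    rw [hsymm.apply j k]; ring
  have swap2 : ∑ j, ∑ k, g j k * w j * y k = ∑ k, w k * ∑ l, g k l * y l := by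
    refine Finset.sum_congr rfl fun j _ => ?_
    rw [Finset.mul_sum]
    refine Finset.sum_congr rfl fun k _ => ?_
    ring
  calc ∑ j, ∑ k, g j k * (t * y j + r * w j) * (t * y k + r * w k)
      = ∑ j, ∑ k, (t^2 * (g j k * y j * y k) + (t*r) * (g j k * y j * w k)
          + ((t*r) * (g j k * w j * y k) + r^2 * (g j k * w j * w k))) := by
        refine Finset.sum_congr rfl fun j _ => Finset.sum_congr rfl fun k _ => by ring
    _ = t^2 * (∑ j, ∑ k, g j k * y j * y k) + (t*r) * (∑ j, ∑ k, g j k * y j * w k)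
          + ((t*r) * (∑ j, ∑ k, g j k * w j * y k) + r^2 * (∑ j, ∑ k, g j k * w j * w k)) := by
        simp [Finset.sum_add_distrib, Finset.mul_sum]
    _ = _ := by rw [swap, swap2]; ring

/-- Claim (4b) of Proposition `thm:cset`: the boundary at infinity of the compactified
T-dual Lagrangian in one affine chart. Here `Q` is the positive definite quadratic form
of the symmetric positive definite matrix `g`, and `L` is the graph piece
`{(x, y) : Q y < 1, xᵢ = exp(yᵢ / √(1 - Q y))}`; the intersection of its closure with the
ellipsoid `{Q = 1}` consists of the points with all `xⱼ ≥ 0`, `yⱼ ≤ 0`, `xⱼ yⱼ = 0`. -/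
theorem stmt_3 (n : ℕ) (hn : 1 ≤ n)
    (g : Matrix (Fin n) (Fin n) ℝ) (hsymm : g.IsSymm) (hpos : g.PosDef)
    (Q : (Fin n → ℝ) → ℝ)
    (hQ : ∀ y, Q y = ∑ j, ∑ k, g j k * y j * y k)
    (L : Set ((Fin n → ℝ) × (Fin n → ℝ)))
    (hL : L = {p | Q p.2 < 1 ∧
      ∀ i, p.1 i = Real.exp (p.2 i / Real.sqrt (1 - Q p.2))}) :
    closure L ∩ {p | Q p.2 = 1} =
      {p | Q p.2 = 1 ∧ ∀ j, 0 ≤ p.1 j ∧ p.2 j ≤ 0 ∧ p.1 j * p.2 j = 0} := by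
  have hQc : Continuous Q := by
    have : Q = fun y => ∑ j, ∑ k, g j k * y j * y k := funext hQ
    rw [this]; fun_prop
  ext p
  obtain ⟨x, y⟩ := p
  simp only [mem_inter_iff, mem_setOf_eq]
  constructor
  · rintro ⟨hcl, hQ1⟩
    refine ⟨hQ1, fun j => ?_⟩
    obtain ⟨u, hu, hulim⟩ := mem_closure_iff_seq_limit.mp hcl
    have hu' : ∀ m, Q (u m).2 < 1 ∧
        ∀ i, (u m).1 i = Real.exp ((u m).2 i / Real.sqrt (1 - Q (u m).2)) := by
      intro m; have := hu m; rw [hL] at this; exact this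
    have h2 : Tendsto (fun m => (u m).2) atTop (𝓝 y) :=
      (continuous_snd.tendsto (x, y)).comp hulim
    have hxj : Tendsto (fun m => (u m).1 j) atTop (𝓝 (x j)) :=
      ((continuous_apply j).tendsto x).comp ((continuous_fst.tendsto (x, y)).comp hulim)
    have hyj : Tendsto (fun m => (u m).2 j) atTop (𝓝 (y j)) :=
      ((continuous_apply j).tendsto y).comp h2
    have hsq : Tendsto (fun m => Real.sqrt (1 - Q (u m).2)) atTop (𝓝 0) := by
      have h1 : Tendsto (fun m => Q (u m).2) atTop (𝓝 1) := by
        have := (hQc.tendsto y).comp h2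
        rwa [hQ1] at this
      have h2' : Tendsto (fun m => 1 - Q (u m).2) atTop (𝓝 0) := by
        have := (tendsto_const_nhds (x := (1:ℝ))).sub h1
        simpa using this
      have := (Real.continuous_sqrt.tendsto 0).comp h2'
      simpa [Function.comp_def] using this
    have hsqpos : ∀ m, 0 < Real.sqrt (1 - Q (u m).2) := fun m =>
      Real.sqrt_pos.2 (by linarith [(hu' m).1])
    have hinv : Tendsto (fun m => (Real.sqrt (1 - Q (u m).2))⁻¹) atTop atTop :=
      tendsto_inv_nhdsGT_zero.comp
        (tendsto_nhdsWithin_of_tendsto_nhds_of_eventually_within _ hsq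
          (Eventually.of_forall fun m => hsqpos m))
    have hyle : y j ≤ 0 := by
      by_contra hpos'
      push_neg at hpos'
      have hdiv : Tendsto (fun m => (u m).2 j / Real.sqrt (1 - Q (u m).2)) atTop atTop := by
        have := Tendsto.pos_mul_atTop hpos' hyj hinv
        refine this.congr fun m => ?_
        rw [div_eq_mul_inv]
      have hexp : Tendsto (fun m => (u m).1 j) atTop atTop := by
        refine (Real.tendsto_exp_atTop.comp hdiv).congr fun m => ?_
        exact ((hu' m).2 j).symm
      exact not_tendsto_nhds_of_tendsto_atTop hexp (x j) hxj
    have hxge : 0 ≤ x j := by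
      refine ge_of_tendsto hxj (Eventually.of_forall fun m => ?_)
      rw [(hu' m).2 j]; exact (Real.exp_pos _).le
    refine ⟨hxge, hyle, ?_⟩
    rcases eq_or_lt_of_le hyle with h0 | hneg
    · rw [h0, mul_zero]
    · have hdiv : Tendsto (fun m => (u m).2 j / Real.sqrt (1 - Q (u m).2)) atTop atBot := by
        have hneg' : (0:ℝ) < -y j := by linarith
        have := Tendsto.pos_mul_atTop hneg' (hyj.neg) hinv
        have h2' : Tendsto (fun m => -((u m).2 j / Real.sqrt (1 - Q (u m).2))) atTop atTop := by
          refine this.congr fun m => ?_; ring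
        exact tendsto_neg_atTop_iff.mp h2'
      have hexp : Tendsto (fun m => (u m).1 j) atTop (𝓝 0) := by
        refine (Real.tendsto_exp_atBot.comp hdiv).congr fun m => ?_
        exact ((hu' m).2 j).symm
      have : x j = 0 := tendsto_nhds_unique hxj hexp
      rw [this, zero_mul]
  · rintro ⟨hQ1, hprop⟩
    refine ⟨?_, hQ1⟩
    classical
    set A : Fin n → ℝ := fun k => ∑ l, g k l * y l with hA
    have hQA : ∑ j, y j * A j = 1 := by
      rw [← hQ1, hQ]
      refine Finset.sum_congr rfl fun j _ => ?_
      rw [hA, Finset.mul_sum]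
      exact Finset.sum_congr rfl fun k _ => by ring
    obtain ⟨j0, _, hj0⟩ : ∃ j0 ∈ Finset.univ, y j0 * A j0 ≠ 0 := by
      apply Finset.exists_ne_zero_of_sum_ne_zero
      rw [hQA]; norm_num
    have hyj0 : y j0 ≠ 0 := fun h => hj0 (by rw [h, zero_mul])
    have hAj0 : A j0 ≠ 0 := fun h => hj0 (by rw [h, mul_zero])
    -- construction
    set c : ℕ → Fin n → ℝ := fun m j => if x j = 0 then -(m:ℝ) else Real.log (x j) with hc
    set w : ℕ → Fin n → ℝ := fun m j =>
      if y j = 0 then c m j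
      else if j = j0 then
        -(∑ k ∈ Finset.univ.filter (fun k => y k = 0), c m k * A k) / A j0
      else 0 with hw
    have horth : ∀ m, ∑ k, w m k * A k = 0 := by
      intro m
      set S := ∑ k ∈ Finset.univ.filter (fun k => y k = 0), c m k * A k with hS
      have : ∀ k, w m k * A k =
          (if y k = 0 then c m k * A k else 0) + (if k = j0 then -S / A j0 * A k else 0) := by
        intro k
        by_cases h1 : y k = 0
        · have h2 : k ≠ j0 := fun h => hyj0 (h ▸ h1)
          simp [hw, h1, h2]
        · by_cases h2 : k = j0
          · rw [h2] at h1 ⊢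
            simp [hw, h1, hS, neg_div]
          · simp [hw, h1, h2]
      rw [Finset.sum_congr rfl fun k _ => this k, Finset.sum_add_distrib,
        Finset.sum_ite_eq' Finset.univ j0 (fun k => -S / A j0 * A k)]
      simp only [Finset.mem_univ, if_true]
      rw [← Finset.sum_filter, div_mul_cancel₀ _ hAj0, ← hS]
      ring
    set Qw : ℕ → ℝ := fun m => ∑ j, ∑ k, g j k * w m j * w m k with hQwdef
    have hQw0 : ∀ m, 0 ≤ Qw m := fun m => qf_nonneg hpos (w m)
    set s : ℕ → ℝ := fun m => (Real.sqrt (1 + Qw m))⁻¹ with hs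
    have h1Qw : ∀ m, (0:ℝ) < 1 + Qw m := fun m => by linarith [hQw0 m]
    have hspos : ∀ m, 0 < s m := fun m => inv_pos.2 (Real.sqrt_pos.2 (h1Qw m))
    have hssq : ∀ m, s m ^ 2 = (1 + Qw m)⁻¹ := by
      intro m
      show ((Real.sqrt (1 + Qw m))⁻¹)^2 = (1 + Qw m)⁻¹
      rw [← Real.sqrt_inv]
      exact Real.sq_sqrt (inv_nonneg.mpr (h1Qw m).le)
    set yt : ℕ → ℝ → (Fin n → ℝ) := fun m t j =>
      t * y j + (Real.sqrt (1 - t^2) * s m) * w m j with hyt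
    have hQyt : ∀ m, ∀ t ∈ Ioo (0:ℝ) 1,
        1 - Q (yt m t) = (1 - t^2) * s m ^ 2 := by
      rintro m t ⟨ht0, ht1⟩
      have ht2 : 0 ≤ 1 - t^2 := by nlinarith
      have : Q (yt m t) = t^2 * Q y
          + 2*t*(Real.sqrt (1-t^2) * s m)*(∑ k, w m k * A k)
          + (Real.sqrt (1-t^2) * s m)^2 * Qw m := by
        rw [hQ (yt m t), hQ y, qf_expand hsymm]
      rw [this, hQ1, horth m, mul_pow, Real.sq_sqrt ht2, hssq m]
      have hne : (1 + Qw m) ≠ 0 := (h1Qw m).ne'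
      field_simp
      ring
    have hsqrtQ : ∀ m, ∀ t ∈ Ioo (0:ℝ) 1,
        Real.sqrt (1 - Q (yt m t)) = Real.sqrt (1 - t^2) * s m := by
      rintro m t ht
      rw [hQyt m t ht, Real.sqrt_mul (by nlinarith [ht.1, ht.2]),
        Real.sqrt_sq (hspos m).le]
    have hQlt : ∀ m, ∀ t ∈ Ioo (0:ℝ) 1, Q (yt m t) < 1 := by
      rintro m t ht
      have h1 := hQyt m t ht
      have h2 : 0 < (1 - t^2) * s m ^ 2 := by
        have h3 : 0 < 1 - t^2 := by nlinarith [ht.1, ht.2]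
        exact mul_pos h3 (pow_pos (hspos m) 2)
      linarith
    have hexpo : ∀ m, ∀ t ∈ Ioo (0:ℝ) 1, ∀ j,
        yt m t j / Real.sqrt (1 - Q (yt m t))
          = t * y j / (Real.sqrt (1 - t^2) * s m) + w m j := by
      rintro m t ht j
      have hsq0 : 0 < Real.sqrt (1 - t^2) := Real.sqrt_pos.2 (by nlinarith [ht.1, ht.2])
      have hD : Real.sqrt (1 - t^2) * s m ≠ 0 := (mul_pos hsq0 (hspos m)).ne'
      rw [hsqrtQ m t ht]
      show (t * y j + (Real.sqrt (1 - t^2) * s m) * w m j) / (Real.sqrt (1 - t^2) * s m) = _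
      rw [add_div, mul_div_cancel_left₀ _ hD]
    -- the point q m t ∈ L
    set q : ℕ → ℝ → ((Fin n → ℝ) × (Fin n → ℝ)) := fun m t =>
      (fun j => Real.exp (yt m t j / Real.sqrt (1 - Q (yt m t))), yt m t) with hq
    have hqL : ∀ m, ∀ t ∈ Ioo (0:ℝ) 1, q m t ∈ L := by
      rintro m t ht
      rw [hL]
      exact ⟨hQlt m t ht, fun i => rfl⟩
    set X : ℕ → Fin n → ℝ := fun m j => if y j = 0 then Real.exp (w m j) else 0 with hX
    have hIoo : ∀ᶠ t in 𝓝[<] (1:ℝ), t ∈ Ioo (0:ℝ) 1 :=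
      Ioo_mem_nhdsLT_of_mem (⟨zero_lt_one, le_refl 1⟩ : (1:ℝ) ∈ Ioc (0:ℝ) 1)
    have hsqt : Tendsto (fun t : ℝ => Real.sqrt (1 - t^2)) (𝓝[<] (1:ℝ)) (𝓝 0) := by
      have hcont : ContinuousAt (fun t : ℝ => Real.sqrt (1 - t^2)) 1 := by fun_prop
      have := hcont.tendsto.mono_left (nhdsWithin_le_nhds : 𝓝[<] (1:ℝ) ≤ 𝓝 1)
      simpa using this
    have lt1 : ∀ m, Tendsto (fun t => q m t) (𝓝[<] (1:ℝ)) (𝓝 (X m, y)) := by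
      intro m
      refine Tendsto.prodMk_nhds ?_ ?_
      · -- x part
        rw [tendsto_pi_nhds]
        intro j
        have hD0 : Tendsto (fun t : ℝ => Real.sqrt (1 - t^2) * s m) (𝓝[<] (1:ℝ)) (𝓝 0) := by
          have := hsqt.mul_const (s m)
          simpa using this
        by_cases hyj : y j = 0
        · have heq : ∀ᶠ t in 𝓝[<] (1:ℝ),
              Real.exp (w m j) = (q m t).1 j := by
            filter_upwards [hIoo] with t ht
            show Real.exp (w m j) = Real.exp (yt m t j / Real.sqrt (1 - Q (yt m t)))
            rw [hexpo m t ht j, hyj]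
            simp
          have : Tendsto (fun _ : ℝ => Real.exp (w m j)) (𝓝[<] (1:ℝ)) (𝓝 (Real.exp (w m j))) :=
            tendsto_const_nhds
          have h2 := this.congr' heq
          rw [hX]; simp only [hyj, if_true]
          exact h2
        · have hylt : y j < 0 := lt_of_le_of_ne (hprop j).2.1 hyj
          have hDpos : ∀ᶠ t in 𝓝[<] (1:ℝ), 0 < Real.sqrt (1 - t^2) * s m := by
            filter_upwards [hIoo] with t ht
            have h3 : 0 < Real.sqrt (1 - t^2) := Real.sqrt_pos.2 (by nlinarith [ht.1, ht.2])
            exact mul_pos h3 (hspos m)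
          have hinv : Tendsto (fun t : ℝ => (Real.sqrt (1 - t^2) * s m)⁻¹)
              (𝓝[<] (1:ℝ)) atTop :=
            tendsto_inv_nhdsGT_zero.comp
              (tendsto_nhdsWithin_of_tendsto_nhds_of_eventually_within _ hD0 hDpos)
          have hnum : Tendsto (fun t : ℝ => -(t * y j)) (𝓝[<] (1:ℝ)) (𝓝 (-(y j))) := by
            have hcont : ContinuousAt (fun t : ℝ => -(t * y j)) 1 := by fun_prop
            have := hcont.tendsto.mono_left (nhdsWithin_le_nhds : 𝓝[<] (1:ℝ) ≤ 𝓝 1)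
            simpa using this
          have hdivbot : Tendsto (fun t : ℝ => t * y j / (Real.sqrt (1 - t^2) * s m))
              (𝓝[<] (1:ℝ)) atBot := by
            have h1 := Tendsto.pos_mul_atTop (by linarith : (0:ℝ) < -(y j)) hnum hinv
            have h2 : Tendsto (fun t : ℝ =>
                -(t * y j / (Real.sqrt (1 - t^2) * s m))) (𝓝[<] (1:ℝ)) atTop := by
              refine h1.congr fun t => ?_; ring
            exact tendsto_neg_atTop_iff.mp h2
          have hsum : Tendsto (fun t : ℝ =>
              t * y j / (Real.sqrt (1 - t^2) * s m) + w m j) (𝓝[<] (1:ℝ)) atBot :=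
            tendsto_atBot_add_const_right _ _ hdivbot
          have hexp := Real.tendsto_exp_atBot.comp hsum
          have heq : ∀ᶠ t in 𝓝[<] (1:ℝ),
              Real.exp (t * y j / (Real.sqrt (1 - t^2) * s m) + w m j) = (q m t).1 j := by
            filter_upwards [hIoo] with t ht
            show Real.exp (t * y j / (Real.sqrt (1 - t^2) * s m) + w m j)
              = Real.exp (yt m t j / Real.sqrt (1 - Q (yt m t)))
            rw [hexpo m t ht j]
          have h2 := hexp.congr' heq
          rw [hX]; simp only [hyj, if_false]
          exact h2
      · -- y part
        rw [tendsto_pi_nhds]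
        intro j
        have hcont : ContinuousAt
            (fun t : ℝ => t * y j + (Real.sqrt (1 - t^2) * s m) * w m j) 1 := by fun_prop
        have := hcont.tendsto.mono_left (nhdsWithin_le_nhds : 𝓝[<] (1:ℝ) ≤ 𝓝 1)
        simpa using this
    have hclm : ∀ m, ((X m : Fin n → ℝ), y) ∈ closure L := by
      intro m
      refine mem_closure_of_tendsto (lt1 m) ?_
      filter_upwards [hIoo] with t ht
      exact hqL m t ht
    have lt2 : Tendsto (fun m => ((X m : Fin n → ℝ), y)) atTop (𝓝 (x, y)) := by
      refine Tendsto.prodMk_nhds ?_ tendsto_const_nhds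
      rw [tendsto_pi_nhds]
      intro j
      by_cases hyj : y j = 0
      · have hjj0 : j ≠ j0 := fun h => hyj0 (h ▸ hyj)
        by_cases hxj : x j = 0
        · have heq : ∀ m, X m j = Real.exp (-(m:ℝ)) := by
            intro m
            rw [hX, hw, hc]
            simp [hyj, hxj]
          have : Tendsto (fun m : ℕ => Real.exp (-(m:ℝ))) atTop (𝓝 0) :=
            Real.tendsto_exp_atBot.comp
              (tendsto_neg_atBot_iff.mpr tendsto_natCast_atTop_atTop)
          rw [hxj]
          exact this.congr fun m => (heq m).symm
        · have hxpos : 0 < x j := lt_of_le_of_ne (hprop j).1 (Ne.symm hxj)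
          have heq : ∀ m, X m j = x j := by
            intro m
            rw [hX, hw, hc]
            simp [hyj, hxj, Real.exp_log hxpos]
          simpa [funext heq] using (tendsto_const_nhds : Tendsto (fun _ : ℕ => x j) atTop (𝓝 (x j)))
      · have hx0 : x j = 0 := by
          have := (hprop j).2.2
          have hylt : y j < 0 := lt_of_le_of_ne (hprop j).2.1 hyj
          rcases mul_eq_zero.mp this with h | h
          · exact h
          · exact absurd h hyj
        have heq : ∀ m, X m j = 0 := fun m => by rw [hX]; simp [hyj]
        rw [hx0]
        simpa [funext heq] using (tendsto_const_nhds : Tendsto (fun _ : ℕ => (0:ℝ)) atTop (𝓝 0))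
    exact isClosed_closure.mem_of_tendsto lt2 (Eventually.of_forall hclm)
end

section
/- Let r ≥ 1 and let C ⊆ ℝ^r be a nonempty open convex cone (i.e., C is open, convex, and closed under multiplication by positive real scalars). Suppose C contains a nonzero vector with integer coordinates. Then there exists a ℤ-basis b₁, …, b_r of the lattice ℤ^r such that the image of each b_i in ℝ^r lies in C. -/
open Set

open Filter in
lemma exists_nat_add_smul_mem {r : ℕ} {C : Set (Fin r → ℝ)} (hopen : IsOpen C)
    (hcone : ∀ t : ℝ, 0 < t → ∀ x ∈ C, t • x ∈ C) {W : Fin r → ℝ} (hW : W ∈ C)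
    (X : Fin r → ℝ) : ∃ n : ℕ, 0 < n ∧ X + (n : ℝ) • W ∈ C := by
  have h1 : Tendsto (fun n : ℕ => W + ((n : ℝ))⁻¹ • X) atTop (nhds W) := by
    have h0 := (tendsto_inv_atTop_nhds_zero_nat (𝕜 := ℝ)).smul_const X
    simpa using tendsto_const_nhds.add h0
  have h2 : ∀ᶠ n : ℕ in atTop, W + ((n : ℝ))⁻¹ • X ∈ C :=
    h1.eventually (hopen.eventually_mem hW)
  obtain ⟨n, hn1, hn2⟩ := ((eventually_ge_atTop 1).and h2).exists
  have hn0 : (0 : ℝ) < n := by exact_mod_cast hn1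
  refine ⟨n, hn1, ?_⟩
  have h3 := hcone n hn0 _ hn2
  have h4 : (n : ℝ) • (W + ((n : ℝ))⁻¹ • X) = X + (n : ℝ) • W := by
    rw [smul_add, smul_smul, mul_inv_cancel₀ (ne_of_gt hn0), one_smul, add_comm]
  rwa [h4] at h3

/-- Step 1 of Theorem `ampgen`: a nonempty open convex cone `C ⊆ ℝ^r` containing a
nonzero integer vector contains the image of a full ℤ-basis of the lattice `ℤ^r`. -/
theorem stmt_10 (r : ℕ) (hr : 1 ≤ r) (C : Set (Fin r → ℝ))
    (hne : C.Nonempty) (hopen : IsOpen C) (hconv : Convex ℝ C)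
    (hcone : ∀ t : ℝ, 0 < t → ∀ x ∈ C, t • x ∈ C)
    (v : Fin r → ℤ) (hv : v ≠ 0) (hvC : (fun i => (v i : ℝ)) ∈ C) :
    ∃ b : Module.Basis (Fin r) ℤ (Fin r → ℤ), ∀ i, (fun j => ((b i) j : ℝ)) ∈ C := by
  classical
  set N : Submodule ℤ (Fin r → ℤ) := Submodule.span ℤ {v} with hN
  have hvN : v ∈ N := Submodule.mem_span_singleton_self v
  obtain ⟨n, bM, bN, f, a, snf⟩ := N.smithNormalForm (Pi.basisFun ℤ (Fin r))
  -- n = 1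
  match n, bN, f, a, snf with
  | 0, bN, f, a, snf =>
    exfalso
    haveI : Unique (Fin 0 →₀ ℤ) := Finsupp.uniqueOfLeft
    haveI : Subsingleton N := bN.repr.toEquiv.subsingleton
    exact hv (by simpa using congrArg Subtype.val (Subsingleton.elim (⟨v, hvN⟩ : N) 0))
  | (m + 2), bN, f, a, snf =>
    exfalso
    obtain ⟨c₀, hc₀⟩ := Submodule.mem_span_singleton.mp (bN 0).2
    obtain ⟨c₁, hc₁⟩ := Submodule.mem_span_singleton.mp (bN 1).2
    have hz : c₁ • bN 0 - c₀ • bN 1 = 0 := by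
      apply Subtype.ext
      push_cast
      rw [← hc₀, ← hc₁]
      module
    have h := congrArg (fun x => bN.repr x 1) hz
    simp only [map_sub, map_smul, Module.Basis.repr_self, Finsupp.coe_sub, Finsupp.coe_smul,
      Pi.sub_apply, Pi.smul_apply, Finsupp.single_apply, map_zero, Finsupp.coe_zero,
      Pi.zero_apply, smul_eq_mul] at h
    norm_num at h
    refine Module.Basis.ne_zero bN 0 (Subtype.ext ?_)
    rw [← hc₀, h]
    simp
  | 1, bN, f, a, snf =>
    set i₀ := f 0 with hi₀
    set k := bN.repr ⟨v, hvN⟩ 0 with hk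
    have hv1 : v = k • (bN 0 : Fin r → ℤ) := by
      have h := congrArg Subtype.val (bN.sum_repr ⟨v, hvN⟩)
      simpa [Fin.sum_univ_one] using h.symm
    have hv2 : v = (k * a 0) • bM i₀ := by rw [hv1, snf 0, smul_smul]
    set s := k * a 0 with hs
    have hs0 : s ≠ 0 := by
      rintro h; exact hv (by rw [hv2, h, zero_smul])
    set u : Fin r → ℤˣ := fun i => if 0 < s then 1 else (if i = i₀ then -1 else 1) with hu
    set b1 := bM.unitsSMul u with hb1
    have hb1i₀ : v = |s| • b1 i₀ := by
      rw [hv2, hb1, Module.Basis.unitsSMul_apply]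
      by_cases h : 0 < s
      · simp [hu, h, abs_of_pos h, Units.smul_def]
      · have hneg : s < 0 := lt_of_le_of_ne (not_lt.mp h) hs0
        simp [hu, h, abs_of_neg hneg, Units.smul_def, neg_smul, smul_neg]
    have hWC : (fun j => ((b1 i₀) j : ℝ)) ∈ C := by
      have hpos : (0 : ℝ) < ((|s| : ℤ) : ℝ) := by
        exact_mod_cast abs_pos.mpr hs0
      have hmem := hcone (((|s| : ℤ) : ℝ))⁻¹ (by positivity) _ hvC
      convert hmem using 1
      funext j
      have hj : v j = |s| * (b1 i₀ j) := by
        have := congrFun hb1i₀ j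
        simpa [Pi.smul_apply, smul_eq_mul] using this
      have hne' : ((|s| : ℤ) : ℝ) ≠ 0 := ne_of_gt hpos
      simp only [Pi.smul_apply, smul_eq_mul]
      push_cast [hj]
      field_simp
    have hchoice : ∀ i : Fin r, ∃ n : ℕ, 0 < n ∧
        (fun j => ((b1 i) j : ℝ)) + (n : ℝ) • (fun j => ((b1 i₀) j : ℝ)) ∈ C :=
      fun i => exists_nat_add_smul_mem hopen hcone hWC _
    choose g hg using hchoice
    set c : Fin r → ℤ := fun i => if i = i₀ then 0 else (g i : ℤ) with hc
    set ℓ : (Fin r → ℤ) →ₗ[ℤ] ℤ := ∑ i, c i • b1.coord i with hℓ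
    have hℓb1 : ∀ j, ℓ (b1 j) = c j := by
      intro j
      simp [hℓ, LinearMap.sum_apply, LinearMap.smul_apply, Module.Basis.coord_apply,
        Module.Basis.repr_self, Finsupp.single_apply, smul_eq_mul]
    have hℓw : ℓ (b1 i₀) = 0 := by rw [hℓb1]; simp [hc]
    set φ : (Fin r → ℤ) →ₗ[ℤ] (Fin r → ℤ) := LinearMap.id + ℓ.smulRight (b1 i₀) with hφ
    set ψ : (Fin r → ℤ) →ₗ[ℤ] (Fin r → ℤ) := LinearMap.id - ℓ.smulRight (b1 i₀) with hψ
    have hφψ : φ.comp ψ = LinearMap.id := by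
      apply LinearMap.ext; intro x
      simp only [LinearMap.comp_apply, hφ, hψ, LinearMap.add_apply, LinearMap.sub_apply,
        LinearMap.id_apply, LinearMap.smulRight_apply, map_sub, map_smul, hℓw,
        smul_zero, sub_zero]
      module
    have hψφ : ψ.comp φ = LinearMap.id := by
      apply LinearMap.ext; intro x
      simp only [LinearMap.comp_apply, hφ, hψ, LinearMap.add_apply, LinearMap.sub_apply,
        LinearMap.id_apply, LinearMap.smulRight_apply, map_add, map_smul, hℓw,
        smul_zero, add_zero]
      module
    set e := LinearEquiv.ofLinear φ ψ hφψ hψφ with he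
    refine ⟨b1.map e, fun i => ?_⟩
    have hbi : (b1.map e) i = b1 i + c i • b1 i₀ := by
      simp [Module.Basis.map_apply, he, LinearEquiv.ofLinear_apply, hφ, LinearMap.add_apply,
        LinearMap.smulRight_apply, hℓb1]
    by_cases h : i = i₀
    · have hci : c i = 0 := by simp [hc, h]
      rw [hbi, hci, zero_smul, add_zero, h]
      exact hWC
    · have hci : c i = (g i : ℤ) := by simp [hc, h]
      rw [hbi, hci]
      have hmem := (hg i).2
      convert hmem using 1
      funext j
      push_cast [Pi.add_apply, Pi.smul_apply, smul_eq_mul]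
      ring
end
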